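/- arXiv:1111.1672 — 3 statements merged into one kernel-verified Lean document; each statement's English description precedes it below -/
import Mathlib

section
/- Let A, B, C, D be non-negative real numbers such that √A > √B + √C + √D. Then there exist positive real numbers β, γ, δ such that A > (1 + β + 1/γ)·B + (1 + γ + 1/δ)·C + (1 + δ + 1/β)·D. -/
/-!
Write `b, c, d` for `√B, √C, √D`, put `s = b + c + d`, and fix `e > 0` with `s + 3e = √A`.
The choice `β = (d + e)/(b + e)`, `γ = (b + e)/(c + e)`, `δ = (c + e)/(d + e)` makes each
coefficient of the form `(s + 3e)/(x + e)` with `x ∈ {b, c, d}`, and `x² / (x + e) ≤ x`, so the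
right-hand side is at most `(s + 3e) s = √A s < A`.
-/

lemma sq_div_add_le {x e : ℝ} (hx : 0 ≤ x) (he : 0 < e) : x ^ 2 / (x + e) ≤ x := by
  rw [div_le_iff₀ (by positivity)]
  nlinarith

lemma one_add_div_add_one_div_div {x y z e : ℝ} (hx : 0 < x + e) :
    1 + (y + e) / (x + e) + 1 / ((x + e) / (z + e)) = (x + y + z + 3 * e) / (x + e) := by
  field_simp
  ring

lemma coeff_mul_sq_le {x y z e : ℝ} (hx : 0 ≤ x) (hy : 0 ≤ y) (hz : 0 ≤ z) (he : 0 < e) :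
    (1 + (y + e) / (x + e) + 1 / ((x + e) / (z + e))) * x ^ 2 ≤ (x + y + z + 3 * e) * x := by
  rw [one_add_div_add_one_div_div (by positivity), div_mul_eq_mul_div,
    mul_div_assoc]
  exact mul_le_mul_of_nonneg_left (sq_div_add_le hx he) (by positivity)

theorem stmt_2 (A B C D : ℝ) (hA : 0 ≤ A) (hB : 0 ≤ B) (hC : 0 ≤ C) (hD : 0 ≤ D)
    (h : Real.sqrt B + Real.sqrt C + Real.sqrt D < Real.sqrt A) :
    ∃ β γ δ : ℝ, 0 < β ∧ 0 < γ ∧ 0 < δ ∧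
      (1 + β + 1/γ) * B + (1 + γ + 1/δ) * C + (1 + δ + 1/β) * D < A := by
  set b := Real.sqrt B
  set c := Real.sqrt C
  set d := Real.sqrt D
  have hb : 0 ≤ b := Real.sqrt_nonneg B
  have hc : 0 ≤ c := Real.sqrt_nonneg C
  have hd : 0 ≤ d := Real.sqrt_nonneg D
  set e := (Real.sqrt A - (b + c + d)) / 3
  have he : 0 < e := by unfold e; linarith
  refine ⟨(d + e) / (b + e), (b + e) / (c + e), (c + e) / (d + e),
    by positivity, by positivity, by positivity, ?_⟩
  rw [← Real.sq_sqrt hB, ← Real.sq_sqrt hC, ← Real.sq_sqrt hD]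
  have hbB := coeff_mul_sq_le hb hd hc he
  have hcC := coeff_mul_sq_le hc hb hd he
  have hdD := coeff_mul_sq_le hd hc hb he
  calc _ ≤ (b + c + d + 3 * e) * (b + c + d) := by linarith
    _ = Real.sqrt A * (b + c + d) := by unfold e; ring
    _ < Real.sqrt A * Real.sqrt A := by gcongr; linarith
    _ = A := Real.mul_self_sqrt hA
end

section
/- Non-negative real numbers A, B, C, D satisfy √A ≤ √B + √C + √D if and only if for all positive reals β, γ, δ, A ≤ (1 + β + 1/γ)·B + (1 + γ + 1/δ)·C + (1 + δ + 1/β)·D. -/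
set_option maxHeartbeats 800000

private lemma amgm_aux (x y t : ℝ) (ht : 0 < t) : 2*x*y ≤ t*x^2 + y^2/t := by
  have h : 0 ≤ (t*x - y)^2 / t := div_nonneg (sq_nonneg _) ht.le
  have he : (t*x - y)^2 / t = t*x^2 - 2*x*y + y^2/t := by
    field_simp; ring
  linarith [he ▸ h]

private lemma pair_aux (X u v : ℝ) (hu : 0 < u) (hv : 0 < v) (hX : X ≤ u^2) :
    (v/u)*X ≤ v*u := by
  rw [div_mul_eq_mul_div, div_le_iff₀ hu]
  nlinarith [mul_le_mul_of_nonneg_left hX hv.le]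

theorem stmt_3 (A B C D : ℝ) (hA : 0 ≤ A) (hB : 0 ≤ B) (hC : 0 ≤ C) (hD : 0 ≤ D) :
    Real.sqrt A ≤ Real.sqrt B + Real.sqrt C + Real.sqrt D ↔
      ∀ β γ δ : ℝ, 0 < β → 0 < γ → 0 < δ →
        A ≤ (1 + β + 1/γ) * B + (1 + γ + 1/δ) * C + (1 + δ + 1/β) * D := by
  have hb0 : 0 ≤ Real.sqrt B := Real.sqrt_nonneg B
  have hc0 : 0 ≤ Real.sqrt C := Real.sqrt_nonneg C
  have hd0 : 0 ≤ Real.sqrt D := Real.sqrt_nonneg D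
  have hB2 : Real.sqrt B ^ 2 = B := Real.sq_sqrt hB
  have hC2 : Real.sqrt C ^ 2 = C := Real.sq_sqrt hC
  have hD2 : Real.sqrt D ^ 2 = D := Real.sq_sqrt hD
  constructor
  · intro h β γ δ hβ hγ hδ
    have hA2 : A ≤ (Real.sqrt B + Real.sqrt C + Real.sqrt D)^2 := by
      have := Real.sq_sqrt hA
      nlinarith [Real.sqrt_nonneg A, h]
    have h1 := amgm_aux (Real.sqrt C) (Real.sqrt B) γ hγ
    have h2 := amgm_aux (Real.sqrt D) (Real.sqrt C) δ hδ
    have h3 := amgm_aux (Real.sqrt B) (Real.sqrt D) β hβ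
    have e1 : (1/γ)*B = Real.sqrt B ^2/γ := by rw [hB2]; ring
    have e2 : (1/δ)*C = Real.sqrt C ^2/δ := by rw [hC2]; ring
    have e3 : (1/β)*D = Real.sqrt D ^2/β := by rw [hD2]; ring
    nlinarith [h1, h2, h3, hA2]
  · intro h
    refine le_of_forall_pos_le_add fun ε hε => ?_
    have hε3 : 0 < ε/3 := by linarith
    have hb'0 : 0 < Real.sqrt B + ε/3 := by positivity
    have hc'0 : 0 < Real.sqrt C + ε/3 := by positivity
    have hd'0 : 0 < Real.sqrt D + ε/3 := by positivity
    have hBb : B ≤ (Real.sqrt B + ε/3)^2 := by nlinarith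
    have hCc : C ≤ (Real.sqrt C + ε/3)^2 := by nlinarith
    have hDd : D ≤ (Real.sqrt D + ε/3)^2 := by nlinarith
    have key := h ((Real.sqrt D + ε/3)/(Real.sqrt B + ε/3))
      ((Real.sqrt B + ε/3)/(Real.sqrt C + ε/3))
      ((Real.sqrt C + ε/3)/(Real.sqrt D + ε/3))
      (by positivity) (by positivity) (by positivity)
    rw [one_div_div, one_div_div, one_div_div] at key
    have t1 := pair_aux B (Real.sqrt B + ε/3) (Real.sqrt D + ε/3) hb'0 hd'0 hBb
    have t2 := pair_aux B (Real.sqrt B + ε/3) (Real.sqrt C + ε/3) hb'0 hc'0 hBb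
    have t3 := pair_aux C (Real.sqrt C + ε/3) (Real.sqrt B + ε/3) hc'0 hb'0 hCc
    have t4 := pair_aux C (Real.sqrt C + ε/3) (Real.sqrt D + ε/3) hc'0 hd'0 hCc
    have t5 := pair_aux D (Real.sqrt D + ε/3) (Real.sqrt C + ε/3) hd'0 hc'0 hDd
    have t6 := pair_aux D (Real.sqrt D + ε/3) (Real.sqrt B + ε/3) hd'0 hb'0 hDd
    have hAsq : A ≤ ((Real.sqrt B + ε/3) + (Real.sqrt C + ε/3) + (Real.sqrt D + ε/3))^2 := by
      have expand : ((Real.sqrt B + ε/3) + (Real.sqrt C + ε/3) + (Real.sqrt D + ε/3))^2 =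
          (Real.sqrt B + ε/3)^2 + (Real.sqrt C + ε/3)^2 + (Real.sqrt D + ε/3)^2
          + (Real.sqrt D + ε/3)*(Real.sqrt B + ε/3) + (Real.sqrt C + ε/3)*(Real.sqrt B + ε/3)
          + (Real.sqrt B + ε/3)*(Real.sqrt C + ε/3) + (Real.sqrt D + ε/3)*(Real.sqrt C + ε/3)
          + (Real.sqrt C + ε/3)*(Real.sqrt D + ε/3) + (Real.sqrt B + ε/3)*(Real.sqrt D + ε/3) := by
        ring
      rw [expand]
      linarith [key, t1, t2, t3, t4, t5, t6, hBb, hCc, hDd]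
    have hfin : Real.sqrt A ≤ (Real.sqrt B + ε/3) + (Real.sqrt C + ε/3) + (Real.sqrt D + ε/3) := by
      calc Real.sqrt A ≤ Real.sqrt (((Real.sqrt B + ε/3) + (Real.sqrt C + ε/3) + (Real.sqrt D + ε/3))^2) :=
            Real.sqrt_le_sqrt hAsq
        _ = _ := Real.sqrt_sq (by positivity)
    linarith
end

section
/- Let γ > 1 and let p_c, p_d, p_s be non-negative reals with p_c + p_d + p_s = 1, p_s ≤ e^{−γ}, and p_c ≥ 1 − e^{−1}. Let D ≥ 0 and 0 ≤ ρ ≤ 1, and set d_c = (1 − ρ)·D, d_d = (1 + ρ/(γ − 1))·D. Then p_c·d_c + p_d·d_d + p_s·3·(γ·D + (3 − γ)·d_d) ≤ max{1 + 8·e^{−γ}, (5·e^{−γ} + e^{−1})/(1 − 1/γ)} · D. -/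
theorem stmt_11 (γ : ℝ) (hγ : 1 < γ)
    (pc pd ps : ℝ) (hpc : 0 ≤ pc) (hpd : 0 ≤ pd) (hps : 0 ≤ ps)
    (hsum : pc + pd + ps = 1)
    (hps' : ps ≤ Real.exp (-γ)) (hpc' : 1 - Real.exp (-1) ≤ pc)
    (D : ℝ) (hD : 0 ≤ D) (ρ : ℝ) (hρ0 : 0 ≤ ρ) (hρ1 : ρ ≤ 1)
    (dc dd : ℝ) (hdc : dc = (1 - ρ) * D) (hdd : dd = (1 + ρ / (γ - 1)) * D) :
    pc * dc + pd * dd + ps * (3 * (γ * D + (3 - γ) * dd)) ≤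
      max (1 + 8 * Real.exp (-γ)) ((5 * Real.exp (-γ) + Real.exp (-1)) / (1 - 1/γ)) * D := by
  set E := Real.exp (-γ) with hE
  set e1 := Real.exp (-1) with he1
  set M := max (1 + 8 * E) ((5 * E + e1) / (1 - 1/γ)) with hM
  have hγ1 : (0:ℝ) < γ - 1 := by linarith
  have hγ0 : (0:ℝ) < γ := by linarith
  have hpd' : pd = 1 - pc - ps := by linarith
  -- affine decomposition
  have key : pc * dc + pd * dd + ps * (3 * (γ * D + (3 - γ) * dd)) =
      (1 - ρ) * ((1 + 8 * ps) * D) + ρ * (γ / (γ - 1) * ((1 - pc) + 5 * ps) * D) := by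
    subst hdc hdd hpd'
    field_simp
    ring
  rw [key]
  have hV0 : (1 + 8 * ps) * D ≤ M * D := by
    apply mul_le_mul_of_nonneg_right _ hD
    calc 1 + 8 * ps ≤ 1 + 8 * E := by linarith
      _ ≤ M := le_max_left _ _
  have hV1 : γ / (γ - 1) * ((1 - pc) + 5 * ps) * D ≤ M * D := by
    apply mul_le_mul_of_nonneg_right _ hD
    have hcoef : 0 ≤ γ / (γ - 1) := le_of_lt (div_pos hγ0 hγ1)
    have h1 : γ / (γ - 1) * ((1 - pc) + 5 * ps) ≤ γ / (γ - 1) * (e1 + 5 * E) := by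
      apply mul_le_mul_of_nonneg_left _ hcoef
      linarith
    have h2 : γ / (γ - 1) * (e1 + 5 * E) = (5 * E + e1) / (1 - 1/γ) := by
      have hne : γ ≠ 0 := ne_of_gt hγ0
      have hne1 : γ - 1 ≠ 0 := ne_of_gt hγ1
      have hne2 : 1 - 1/γ ≠ 0 := by
        have : 1 - 1/γ = (γ - 1)/γ := by field_simp
        rw [this]; positivity
      field_simp
      ring
    calc γ / (γ - 1) * ((1 - pc) + 5 * ps) ≤ (5 * E + e1) / (1 - 1/γ) := by
          rw [← h2]; exact h1
      _ ≤ M := le_max_right _ _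
  calc (1 - ρ) * ((1 + 8 * ps) * D) + ρ * (γ / (γ - 1) * ((1 - pc) + 5 * ps) * D)
      ≤ (1 - ρ) * (M * D) + ρ * (M * D) := by
        apply add_le_add
        · exact mul_le_mul_of_nonneg_left hV0 (by linarith)
        · exact mul_le_mul_of_nonneg_left hV1 hρ0
    _ = M * D := by ring
end
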